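/- arXiv:2211.13647 — 3 statements merged into one kernel-verified Lean document; each statement's English description precedes it below -/
import Mathlib

section
/- Let H be a connected linear r-uniform hypergraph on n vertices. Then the spectral radius of its adjacency tensor satisfies ρ(H) ≤ (1/(r-1))·ρ(∂H), where ∂H is the shadow graph of H and ρ(∂H) is the spectral radius of its adjacency matrix. -/
/-!
Let `A(H) x^{r-1} = λ x^{[r-1]}` with `x ≠ 0` and put `y v = |x v|^{r-1}`. At a vertex `i`,
AM–GM bounds each edge term `∏_{v ∈ e \ i} |x v|` by `(∑_{v ∈ e \ i} y v) / (r - 1)`, and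
linearity makes the sets `e \ i` (for edges `e ∋ i`) disjoint with union the neighbourhood of `i`
in `∂H`. Hence `(r - 1) |λ| y ≤ A(∂H) y` entrywise; pairing with `y ≥ 0` and applying the Rayleigh
principle to the symmetric matrix `A(∂H)` yields an eigenvalue of `∂H` of size at least
`(r - 1) |λ|`.
-/

open Finset

/-- The `i`-th component of `A(H) x^{r-1}`, where `A(H)` is the adjacency tensor
of the uniform hypergraph `H` (for an edge all of whose vertices are distinct,
the sum over the `(r-1)!` orderings cancels the `1/(r-1)!` coefficient). -/
noncomputable def tensorApply {V : Type*} [DecidableEq V]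
    (H : Finset (Finset V)) (x : V → ℂ) (i : V) : ℂ :=
  ∑ e ∈ H.filter (fun e => i ∈ e), ∏ v ∈ e.erase i, x v

/-- `lam` is an eigenvalue of the adjacency tensor of the `r`-uniform
hypergraph `H`: `A(H) x^{r-1} = lam · x^{[r-1]}` for some nonzero `x`. -/
def IsTensorEig {V : Type*} [DecidableEq V]
    (H : Finset (Finset V)) (r : ℕ) (lam : ℂ) : Prop :=
  ∃ x : V → ℂ, x ≠ 0 ∧ ∀ i, tensorApply H x i = lam * (x i) ^ (r - 1)

/-- The spectral radius of the adjacency tensor of `H`: the supremum of the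
moduli of its eigenvalues. -/
noncomputable def specRad {V : Type*} [DecidableEq V]
    (H : Finset (Finset V)) (r : ℕ) : ℝ :=
  sSup { m : ℝ | ∃ lam : ℂ, IsTensorEig H r lam ∧ m = ‖lam‖ }

-- `lam` is an eigenvalue of the adjacency matrix of the graph `G`.
open Classical in
def IsMatEig {V : Type*} [Fintype V] (G : SimpleGraph V) (lam : ℂ) : Prop :=
  ∃ x : V → ℂ, x ≠ 0 ∧
    (Matrix.of (fun a b => if G.Adj a b then (1 : ℂ) else 0)).mulVec x = lam • x

/-- The spectral radius of the adjacency matrix of a graph `G`. -/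
noncomputable def graphSpecRad {V : Type*} [Fintype V] (G : SimpleGraph V) : ℝ :=
  sSup { m : ℝ | ∃ lam : ℂ, IsMatEig G lam ∧ m = ‖lam‖ }

/-- The shadow graph of a hypergraph. -/
def shadowGraph {V : Type*} (H : Finset (Finset V)) : SimpleGraph V where
  Adj x y := x ≠ y ∧ ∃ e ∈ H, x ∈ e ∧ y ∈ e
  symm := by
    constructor
    rintro x y ⟨hxy, e, he, hx, hy⟩
    exact ⟨hxy.symm, e, he, hy, hx⟩
  loopless := by
    constructor
    rintro x ⟨hx, -⟩
    exact hx rfl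

open scoped Matrix

namespace Real

theorem card_mul_prod_le_sum_pow_card {ι : Type*} (s : Finset ι) {f : ι → ℝ}
    (hf : ∀ i ∈ s, 0 ≤ f i) : #s * ∏ i ∈ s, f i ≤ ∑ i ∈ s, f i ^ #s := by
  rcases s.eq_empty_or_nonempty with rfl | hs
  · simp
  have hcard : (0 : ℝ) < #s := by exact_mod_cast hs.card_pos
  have amgm := geom_mean_le_arith_mean_weighted s (fun _ => (#s : ℝ)⁻¹) (fun i => f i ^ #s)
    (fun _ _ => by positivity) (by simp [hcard.ne']) (fun i hi => pow_nonneg (hf i hi) _)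
  rw [← mul_sum,
    prod_congr rfl fun i hi => pow_rpow_inv_natCast (hf i hi) hs.card_pos.ne'] at amgm
  rwa [← le_inv_mul_iff₀ hcard]

end Real

theorem Matrix.IsHermitian.exists_eigenvector_ge {n : Type*} [Fintype n] {A : Matrix n n ℝ}
    (hA : A.IsHermitian) {y : n → ℝ} (hy : y ≠ 0) {μ : ℝ} (h : μ * (y ⬝ᵥ y) ≤ y ⬝ᵥ A *ᵥ y) :
    ∃ lam z, z ≠ 0 ∧ A *ᵥ z = lam • z ∧ μ ≤ lam := by
  classical
  set T := A.toEuclideanLin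
  have hT : T.IsSymmetric := Matrix.isSymmetric_toEuclideanLin_iff.mpr hA
  set y' := WithLp.toLp 2 y
  have hy' : y' ≠ 0 := by simpa [y'] using hy
  have : Nontrivial (EuclideanSpace ℝ n) := nontrivial_of_ne y' 0 hy'
  obtain ⟨z, hz⟩ := hT.hasEigenvalue_iSup_of_finiteDimensional.exists_hasEigenvector
  refine ⟨_, WithLp.ofLp z, ?_, congrArg WithLp.ofLp hz.apply_eq_smul, ?_⟩
  · simpa using hz.2
  have hbdd : BddAbove (Set.range fun x : { x : EuclideanSpace ℝ n // x ≠ 0 } =>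
      RCLike.re (inner ℝ (T x) (x : EuclideanSpace ℝ n)) / ‖(x : EuclideanSpace ℝ n)‖ ^ 2) :=
    ⟨_, Set.forall_mem_range.mpr fun x =>
      (le_abs_self _).trans (T.toContinuousLinearMap.rayleighQuotient_le_norm x)⟩
  refine le_trans ?_ (le_ciSup hbdd ⟨y', hy'⟩)
  have hnorm : ‖y'‖ ^ 2 = y ⬝ᵥ y := by
    rw [← real_inner_self_eq_norm_sq]; rfl
  have hinner : RCLike.re (inner ℝ (T y') y') = y ⬝ᵥ A *ᵥ y := by
    simp [T, y', EuclideanSpace.inner_toLp_toLp]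
  rw [hinner, le_div_iff₀ (pow_pos (norm_pos_iff.mpr hy') 2), hnorm]
  exact h

namespace SimpleGraph

variable {V : Type*} [Fintype V] (G : SimpleGraph V)

theorem bddAbove_norm_isMatEig : BddAbove {m : ℝ | ∃ lam : ℂ, IsMatEig G lam ∧ m = ‖lam‖} := by
  classical
  refine ((Module.End.finite_hasEigenvalue (Matrix.toLin' (G.adjMatrix ℂ))).image (‖·‖)).bddAbove
    |>.mono ?_
  rintro _ ⟨lam, ⟨x, hx, hmul⟩, rfl⟩
  refine ⟨lam, Module.End.hasEigenvalue_of_hasEigenvector ⟨?_, hx⟩, rfl⟩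
  rw [Module.End.mem_eigenspace_iff, Matrix.toLin'_apply, ← hmul]
  congr

theorem norm_le_graphSpecRad {lam : ℂ} (h : IsMatEig G lam) : ‖lam‖ ≤ graphSpecRad G :=
  le_csSup G.bddAbove_norm_isMatEig ⟨lam, h, rfl⟩

theorem graphSpecRad_nonneg : 0 ≤ graphSpecRad G :=
  Real.sSup_nonneg <| by rintro _ ⟨lam, -, rfl⟩; exact norm_nonneg lam

theorem isMatEig_ofReal [DecidableRel G.Adj] {lam : ℝ} {z : V → ℝ} (hz : z ≠ 0)
    (h : G.adjMatrix ℝ *ᵥ z = lam • z) : IsMatEig G lam := by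
  refine ⟨fun v => z v, fun h0 => hz (funext fun v => by simpa using congrFun h0 v), ?_⟩
  ext v
  have hv := congrArg (fun w : V → ℝ => (w v : ℂ)) h
  simp only [Matrix.mulVec, dotProduct, adjMatrix_apply, Matrix.of_apply, ite_mul, one_mul,
    zero_mul, Complex.ofReal_sum, apply_ite ((↑) : ℝ → ℂ), Complex.ofReal_zero, Pi.smul_apply,
    smul_eq_mul, Complex.ofReal_mul] at hv ⊢
  -- the two sides differ only in the `Decidable (G.Adj v u)` instances
  convert hv

theorem le_graphSpecRad_of_mul_dotProduct_le [DecidableRel G.Adj] {y : V → ℝ} (hy : y ≠ 0)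
    {μ : ℝ} (h : μ * (y ⬝ᵥ y) ≤ y ⬝ᵥ G.adjMatrix ℝ *ᵥ y) : μ ≤ graphSpecRad G := by
  obtain ⟨lam, z, hz, hmul, hμ⟩ := (G.isHermitian_adjMatrix ℝ).exists_eigenvector_ge hy h
  calc μ ≤ |lam| := hμ.trans (le_abs_self lam)
    _ = ‖(lam : ℂ)‖ := (Complex.norm_real lam).symm
    _ ≤ graphSpecRad G := G.norm_le_graphSpecRad (G.isMatEig_ofReal hz hmul)

end SimpleGraph

@[simp]
theorem shadowGraph_adj {V : Type*} {H : Finset (Finset V)} {x y : V} :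
    (shadowGraph H).Adj x y ↔ x ≠ y ∧ ∃ e ∈ H, x ∈ e ∧ y ∈ e :=
  Iff.rfl

section Hypergraph

open SimpleGraph

variable {V : Type*} [DecidableEq V] {H : Finset (Finset V)}

theorem norm_tensorApply_le (x : V → ℂ) (i : V) :
    ‖tensorApply H x i‖ ≤ ∑ e ∈ H with i ∈ e, ∏ v ∈ e.erase i, ‖x v‖ :=
  (norm_sum_le _ _).trans_eq (sum_congr rfl fun _ _ => norm_prod _ _)

theorem pairwiseDisjoint_erase_of_linear (hlinear : ∀ e ∈ H, ∀ f ∈ H, e ≠ f → #(e ∩ f) ≤ 1)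
    (i : V) :
    (({e ∈ H | i ∈ e} : Finset (Finset V)) : Set (Finset V)).PairwiseDisjoint (·.erase i) := by
  intro e he f hf hef
  rw [mem_coe, mem_filter] at he hf
  refine disjoint_left.mpr fun v hve hvf => (hlinear e he.1 f hf.1 hef).not_gt ?_
  exact one_lt_card.mpr ⟨i, mem_inter.mpr ⟨he.2, hf.2⟩, v,
    mem_inter.mpr ⟨mem_of_mem_erase hve, mem_of_mem_erase hvf⟩, (ne_of_mem_erase hve).symm⟩

variable [Fintype V] [DecidableRel (shadowGraph H).Adj]

theorem biUnion_erase_eq_neighborFinset (i : V) :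
    {e ∈ H | i ∈ e}.biUnion (·.erase i) = (shadowGraph H).neighborFinset i := by
  ext v
  simp only [mem_biUnion, mem_filter, mem_erase, mem_neighborFinset, shadowGraph_adj]
  constructor
  · rintro ⟨e, ⟨he, hie⟩, hvi, hve⟩
    exact ⟨Ne.symm hvi, e, he, hie, hve⟩
  · rintro ⟨hiv, e, he, hie, hve⟩
    exact ⟨e, ⟨he, hie⟩, Ne.symm hiv, hve⟩

theorem sum_sum_erase_eq_adjMatrix_mulVec {R : Type*} [NonAssocSemiring R]
    (hlinear : ∀ e ∈ H, ∀ f ∈ H, e ≠ f → #(e ∩ f) ≤ 1) (y : V → R) (i : V) :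
    ∑ e ∈ H with i ∈ e, ∑ v ∈ e.erase i, y v = ((shadowGraph H).adjMatrix R *ᵥ y) i := by
  rw [adjMatrix_mulVec_apply, ← biUnion_erase_eq_neighborFinset,
    sum_biUnion (pairwiseDisjoint_erase_of_linear hlinear i)]

theorem cast_mul_norm_mul_le_adjMatrix_mulVec {r : ℕ} (huniform : ∀ e ∈ H, #e = r)
    (hlinear : ∀ e ∈ H, ∀ f ∈ H, e ≠ f → #(e ∩ f) ≤ 1) {x : V → ℂ} {lam : ℂ}
    (heig : ∀ i, tensorApply H x i = lam * x i ^ (r - 1)) (i : V) :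
    ((r - 1 : ℕ) : ℝ) * ‖lam‖ * ‖x i‖ ^ (r - 1) ≤
      ((shadowGraph H).adjMatrix ℝ *ᵥ fun v => ‖x v‖ ^ (r - 1)) i := by
  have amgm : ∀ e ∈ H, i ∈ e →
      ((r - 1 : ℕ) : ℝ) * ∏ v ∈ e.erase i, ‖x v‖ ≤ ∑ v ∈ e.erase i, ‖x v‖ ^ (r - 1) := by
    intro e he hie
    have hcard : #(e.erase i) = r - 1 := by rw [card_erase_of_mem hie, huniform e he]
    simpa only [hcard] using
      Real.card_mul_prod_le_sum_pow_card (e.erase i) fun v _ => norm_nonneg (x v)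
  calc ((r - 1 : ℕ) : ℝ) * ‖lam‖ * ‖x i‖ ^ (r - 1) = (r - 1 : ℕ) * ‖tensorApply H x i‖ := by
        rw [heig, norm_mul, norm_pow, mul_assoc]
    _ ≤ (r - 1 : ℕ) * ∑ e ∈ H with i ∈ e, ∏ v ∈ e.erase i, ‖x v‖ := by
        gcongr; exact norm_tensorApply_le x i
    _ ≤ ∑ e ∈ H with i ∈ e, ∑ v ∈ e.erase i, ‖x v‖ ^ (r - 1) := by
        rw [mul_sum]
        exact sum_le_sum fun e he => amgm e (mem_filter.1 he).1 (mem_filter.1 he).2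
    _ = _ := sum_sum_erase_eq_adjMatrix_mulVec hlinear _ i

theorem cast_mul_norm_le_graphSpecRad_of_isTensorEig {r : ℕ} (huniform : ∀ e ∈ H, #e = r)
    (hlinear : ∀ e ∈ H, ∀ f ∈ H, e ≠ f → #(e ∩ f) ≤ 1) {lam : ℂ} (hlam : IsTensorEig H r lam) :
    ((r - 1 : ℕ) : ℝ) * ‖lam‖ ≤ graphSpecRad (shadowGraph H) := by
  obtain ⟨x, hx, heig⟩ := hlam
  set y : V → ℝ := fun v => ‖x v‖ ^ (r - 1)
  have hy : y ≠ 0 := by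
    obtain ⟨j, hj⟩ := Function.ne_iff.mp hx
    exact Function.ne_iff.mpr ⟨j, pow_ne_zero _ (norm_ne_zero_iff.mpr hj)⟩
  refine (shadowGraph H).le_graphSpecRad_of_mul_dotProduct_le hy ?_
  simp only [dotProduct, mul_sum]
  refine sum_le_sum fun i _ => ?_
  calc ((r - 1 : ℕ) : ℝ) * ‖lam‖ * (y i * y i)
        = y i * (((r - 1 : ℕ) : ℝ) * ‖lam‖ * y i) := by ring
    _ ≤ y i * ((shadowGraph H).adjMatrix ℝ *ᵥ y) i := by
      gcongr
      exact cast_mul_norm_mul_le_adjMatrix_mulVec huniform hlinear heig i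

end Hypergraph

theorem stmt_11_general {V : Type*} [Fintype V] [DecidableEq V] (r : ℕ) (hr : 2 ≤ r)
    (H : Finset (Finset V))
    (huniform : ∀ e ∈ H, e.card = r)
    (hlinear : ∀ e ∈ H, ∀ f ∈ H, e ≠ f → (e ∩ f).card ≤ 1) :
    specRad H r ≤ (1 / ((r : ℝ) - 1)) * graphSpecRad (shadowGraph H) := by
  classical
  have hr1 : (0 : ℝ) < r - 1 := by
    have : (2 : ℝ) ≤ r := by exact_mod_cast hr
    linarith
  refine Real.sSup_le ?_ (mul_nonneg (by positivity) (SimpleGraph.graphSpecRad_nonneg _))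
  rintro _ ⟨lam, hlam, rfl⟩
  have hbound := cast_mul_norm_le_graphSpecRad_of_isTensorEig huniform hlinear hlam
  rw [Nat.cast_sub (by omega), Nat.cast_one] at hbound
  rw [one_div_mul_eq_div, le_div_iff₀ hr1]
  linarith

/-- For a connected linear `r`-uniform hypergraph `H`,
`ρ(H) ≤ ρ(∂H)/(r-1)`. -/
theorem stmt_11 {V : Type*} [Fintype V] [DecidableEq V] (r : ℕ) (hr : 2 ≤ r)
    (H : Finset (Finset V))
    (huniform : ∀ e ∈ H, e.card = r)
    (hlinear : ∀ e ∈ H, ∀ f ∈ H, e ≠ f → (e ∩ f).card ≤ 1)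
    (hconn : (shadowGraph H).Connected) :
    specRad H r ≤ (1 / ((r : ℝ) - 1)) * graphSpecRad (shadowGraph H) :=
  stmt_11_general r hr H huniform hlinear
end

section
/- Let F be a (k+1)-color-critical graph, i.e., χ(F) = k+1 and there exists an edge e with χ(F - e) = k, and let l be at least the maximum size of a color class in some proper k-coloring of F - e. Then the graph K_k^+(l,...,l), obtained from the complete k-partite graph with all parts of size l by adding one edge inside the first part, contains a subgraph isomorphic to F. -/
/-!
Order the vertices so that the endpoints `a`, `b` of the critical edge come first, and send each
vertex `v` to the pair (its colour, the number of earlier vertices of the same colour). This is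
injective, lands in `Fin k × Fin l` because colour classes have at most `l` vertices, and edges of
`F - e` join different colours, hence different parts. After renaming colours so that `a` has
colour `0`, the edge `ab`, if monochromatic, goes to two distinct vertices among the first two of
part `0`, which is exactly the extra edge of `K_k^+`.
-/

/-- `K_k^+(l,…,l)`: the complete `k`-partite graph with all parts of size `l`,
with one extra edge (between the first two vertices of the first part) added
inside the first part. -/
def KkPlus (k l : ℕ) : SimpleGraph (Fin k × Fin l) where
  Adj a b := a.1 ≠ b.1 ∨
    (a ≠ b ∧ a.1.val = 0 ∧ b.1.val = 0 ∧ a.2.val ≤ 1 ∧ b.2.val ≤ 1)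
  symm := by
    constructor
    rintro a b (h | ⟨h1, h2, h3, h4, h5⟩)
    · exact Or.inl h.symm
    · exact Or.inr ⟨h1.symm, h3, h2, h5, h4⟩
  loopless := by
    constructor
    rintro a (h | ⟨h1, -⟩)
    · exact h rfl
    · exact h1 rfl

open Finset Function

section FiberRank

variable {α β γ : Type*} [Fintype α] [DecidableEq β] [LinearOrder γ]
  (C : α → β) (ρ : α → γ)

def fiberRank (v : α) : ℕ := #{w | C w = C v ∧ ρ w < ρ v}

variable {C ρ}

theorem fiberRank_lt_card_fiber (v : α) : fiberRank C ρ v < #{w | C w = C v} := by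
  refine card_lt_card ((ssubset_iff_of_subset fun w hw => ?_).mpr ⟨v, by simp, by simp⟩)
  simp only [mem_filter, mem_univ, true_and] at hw ⊢
  exact hw.1

theorem fiberRank_lt_fiberRank {u v : α} (hC : C u = C v) (hρ : ρ u < ρ v) :
    fiberRank C ρ u < fiberRank C ρ v := by
  refine card_lt_card ((ssubset_iff_of_subset fun w hw => ?_).mpr ⟨u, ?_, by simp⟩)
  · simp only [mem_filter, mem_univ, true_and] at hw ⊢
    exact ⟨hw.1.trans hC, hw.2.trans hρ⟩
  · simp [hC, hρ]

theorem injective_prod_fiberRank (hρ : Injective ρ) :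
    Injective fun v => (C v, fiberRank C ρ v) := by
  intro u v huv
  simp only [Prod.mk.injEq] at huv
  obtain ⟨hC, hrank⟩ := huv
  rcases lt_trichotomy (ρ u) (ρ v) with hlt | heq | hgt
  · exact absurd hrank (fiberRank_lt_fiberRank hC hlt).ne
  · exact hρ heq
  · exact absurd hrank (fiberRank_lt_fiberRank hC.symm hgt).ne'

theorem fiberRank_le_of_injective {ρ : α → ℕ} (hρ : Injective ρ) (v : α) :
    fiberRank C ρ v ≤ ρ v := by
  calc fiberRank C ρ v ≤ #(range (ρ v)) :=
        card_le_card_of_injOn ρ (fun w hw => by simpa using (mem_filter.mp hw).2.2)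
          hρ.injOn
    _ = ρ v := card_range _

end FiberRank

theorem exists_injective_nat_eq_zero_eq_one {α : Type*} [Countable α] {a b : α} (hab : a ≠ b) :
    ∃ ρ : α → ℕ, Injective ρ ∧ ρ a = 0 ∧ ρ b = 1 := by
  classical
  obtain ⟨ι, hι⟩ := exists_injective_nat α
  refine ⟨fun v => if v = a then 0 else if v = b then 1 else ι v + 2, ?_, by simp,
    by simp [hab.symm]⟩
  intro u v h
  simp only at h
  split_ifs at h <;> first | (subst_vars; rfl) | omega | exact hι (by omega)

theorem stmt_15_general {α : Type*} [Fintype α] (k l : ℕ)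
    (F : SimpleGraph α)
    (e : Sym2 α) (he : e ∈ F.edgeSet)
    (C : α → Fin k)
    (hC : ∀ u v : α, (F.deleteEdges {e}).Adj u v → C u ≠ C v)
    (hl : ∀ c : Fin k, (Finset.univ.filter (fun v => C v = c)).card ≤ l) :
    ∃ f : α → Fin k × Fin l, Function.Injective f ∧
      ∀ u v : α, F.Adj u v → (KkPlus k l).Adj (f u) (f v) := by
  induction e using Sym2.inductionOn with | hf a b =>
  have hab : F.Adj a b := he
  obtain ⟨ρ, hρ, hρa, hρb⟩ := exists_injective_nat_eq_zero_eq_one hab.ne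
  let σ := Equiv.swap (C a) ⟨0, (C a).pos⟩
  let f : α → Fin k × Fin l := fun v =>
    (σ (C v), ⟨fiberRank C ρ v, (fiberRank_lt_card_fiber v).trans_le (hl _)⟩)
  have hf : Injective f := fun u v huv =>
    injective_prod_fiberRank hρ (Prod.ext (σ.injective congr($huv.1)) congr(($huv.2 : ℕ)))
  refine ⟨f, hf, fun u v huv => ?_⟩
  by_cases hcol : C u = C v
  · have huv_ab : s(u, v) = s(a, b) := by
      by_contra hne
      exact hC u v (SimpleGraph.deleteEdges_adj.mpr ⟨huv, by simpa using hne⟩) hcol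
    have hcol_ab : C a = C b := by
      rcases Sym2.eq_iff.mp huv_ab with ⟨rfl, rfl⟩ | ⟨rfl, rfl⟩ <;> simp [hcol]
    have hend : ∀ w, w = a ∨ w = b → (f w).1.val = 0 ∧ (f w).2.val ≤ 1 := by
      rintro w (rfl | rfl)
      · exact ⟨by simp [f, σ], (fiberRank_le_of_injective hρ _).trans (by omega)⟩
      · exact ⟨by simp [f, σ, hcol_ab], (fiberRank_le_of_injective hρ _).trans (by omega)⟩
    have hu := hend u (Sym2.mem_iff.mp (huv_ab ▸ Sym2.mem_mk_left u v))
    have hv := hend v (Sym2.mem_iff.mp (huv_ab ▸ Sym2.mem_mk_right u v))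
    exact Or.inr ⟨hf.ne huv.ne, hu.1, hv.1, hu.2, hv.2⟩
  · exact Or.inl (σ.injective.ne hcol)

/-- If `F` is `(k+1)`-color-critical with critical edge `e`, and `l` bounds the
sizes of the color classes of some proper `k`-coloring of `F - e`, then
`K_k^+(l,…,l)` contains a copy of `F`. -/
theorem stmt_15 {α : Type*} [Fintype α] [DecidableEq α] (k l : ℕ)
    (F : SimpleGraph α)
    (hchi : F.chromaticNumber = (k + 1 : ℕ))
    (e : Sym2 α) (he : e ∈ F.edgeSet)
    (hcrit : (F.deleteEdges {e}).chromaticNumber = (k : ℕ))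
    (C : α → Fin k)
    (hC : ∀ u v : α, (F.deleteEdges {e}).Adj u v → C u ≠ C v)
    (hl : ∀ c : Fin k, (Finset.univ.filter (fun v => C v = c)).card ≤ l) :
    ∃ f : α → Fin k × Fin l, Function.Injective f ∧
      ∀ u v : α, F.Adj u v → (KkPlus k l).Adj (f u) (f v) :=
  stmt_15_general k l F e he C hC hl
end

section
/- Let k ≥ r ≥ 2 and suppose m, k, r satisfy m(k-1) ≡ 0 (mod r-1) and m²k(k-1) ≡ 0 (mod r(r-1)), and a 2-GDD of group type m^k with block size r and index 1 exists on n = mk points. Let F be any graph with chromatic number k+1. Then the hypergraph H of the GDD is F^r-free, is m(k-1)/(r-1)-regular, and hence has spectral radius exactly n(k-1)/(k(r-1)). -/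
open Finset

/-- `H` contains a copy of the `r`-expansion of the graph with edge set `EG`
(a set of 2-element vertex sets on `α`): there is an injection `g` of the
vertices and enlargement sets `S e` of size `r-2`, disjoint from the image of
`g` and pairwise disjoint, such that every enlarged edge is an edge of `H`. -/
def ContainsExpansion {α V : Type*} [DecidableEq α] [DecidableEq V]
    (r : ℕ) (EG : Finset (Finset α)) (H : Finset (Finset V)) : Prop :=
  ∃ (g : α → V) (S : Finset α → Finset V),
    Function.Injective g ∧
    (∀ e ∈ EG, (S e).card = r - 2) ∧
    (∀ e ∈ EG, ∀ v ∈ S e, v ∉ Set.range g) ∧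
    (∀ e ∈ EG, ∀ f ∈ EG, e ≠ f → Disjoint (S e) (S f)) ∧
    (∀ e ∈ EG, e.image g ∪ S e ∈ H)

/-- The unordered pair `e : Sym2 α` as a two-element finset. -/
def sym2ToFinset {α : Type*} [DecidableEq α] (e : Sym2 α) : Finset α :=
  Sym2.lift ⟨fun a b => ({a, b} : Finset α), fun a b => Finset.pair_comm a b⟩ e


/-! The blocks meet every group at most once, so the group map properly colours the shadow graph
with `k` colours; a copy of `F^r` would pull this back to a `k`-colouring of `F`. Around a vertex `v`,
the blocks through `v`, minus `v`, partition the `m(k-1)` points outside the group of `v`, so `H` is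
regular of degree `d = m(k-1)/(r-1)`; the all-ones vector is then an eigenvector for `d`, and comparing
the eigen-equation at a coordinate of maximal modulus bounds every eigenvalue by `d`. -/

section Hypergraph

variable {V : Type*} [DecidableEq V]

def vertexDegree (H : Finset (Finset V)) (v : V) : ℕ := #{e ∈ H | v ∈ e}

theorem isTensorEig_vertexDegree [Nonempty V] {H : Finset (Finset V)} {r d : ℕ}
    (hreg : ∀ v, vertexDegree H v = d) : IsTensorEig H r d := by
  refine ⟨fun _ => 1, Function.ne_iff.mpr ⟨Classical.arbitrary V, one_ne_zero⟩, fun i => ?_⟩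
  simp only [tensorApply, prod_const_one, sum_const, nsmul_eq_mul, mul_one, one_pow]
  exact congrArg Nat.cast (hreg i)

theorem norm_le_of_isTensorEig [Fintype V] {H : Finset (Finset V)} {r d : ℕ}
    (hblock : ∀ e ∈ H, e.card = r) (hreg : ∀ v, vertexDegree H v = d) {lam : ℂ}
    (hlam : IsTensorEig H r lam) : ‖lam‖ ≤ d := by
  obtain ⟨x, hx0, hx⟩ := hlam
  obtain ⟨j, hj⟩ := Function.ne_iff.mp hx0
  obtain ⟨i, -, hi⟩ := exists_max_image univ (fun v => ‖x v‖) ⟨j, mem_univ j⟩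
  have hxi : 0 < ‖x i‖ := (norm_pos_iff.mpr hj).trans_le (hi j (mem_univ j))
  have hedge : ∀ e ∈ H.filter (i ∈ ·), ‖∏ v ∈ e.erase i, x v‖ ≤ ‖x i‖ ^ (r - 1) := by
    intro e he
    obtain ⟨he, hie⟩ := mem_filter.mp he
    rw [norm_prod, ← hblock e he, ← card_erase_of_mem hie, ← prod_const]
    exact prod_le_prod (fun _ _ => norm_nonneg _) (fun v _ => hi v (mem_univ v))
  refine le_of_mul_le_mul_right ?_ (pow_pos hxi (r - 1))
  calc ‖lam‖ * ‖x i‖ ^ (r - 1) = ‖tensorApply H x i‖ := by rw [hx i, norm_mul, norm_pow]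
    _ ≤ ∑ e ∈ H.filter (i ∈ ·), ‖∏ v ∈ e.erase i, x v‖ := norm_sum_le _ _
    _ ≤ ∑ e ∈ H.filter (i ∈ ·), ‖x i‖ ^ (r - 1) := sum_le_sum hedge
    _ = d * ‖x i‖ ^ (r - 1) := by rw [sum_const, ← vertexDegree, hreg i, nsmul_eq_mul]

theorem specRad_eq_of_forall_vertexDegree_eq [Fintype V] [Nonempty V] {H : Finset (Finset V)}
    {r d : ℕ} (hblock : ∀ e ∈ H, e.card = r) (hreg : ∀ v, vertexDegree H v = d) :
    specRad H r = d := by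
  have hmem : (d : ℝ) ∈ {s : ℝ | ∃ lam : ℂ, IsTensorEig H r lam ∧ s = ‖lam‖} :=
    ⟨d, isTensorEig_vertexDegree hreg, (Complex.norm_natCast d).symm⟩
  have hub : (d : ℝ) ∈ upperBounds {s : ℝ | ∃ lam : ℂ, IsTensorEig H r lam ∧ s = ‖lam‖} := by
    rintro s ⟨lam, hlam, rfl⟩
    exact norm_le_of_isTensorEig hblock hreg hlam
  exact IsGreatest.csSup_eq ⟨hmem, hub⟩

theorem specRad_of_isEmpty [IsEmpty V] (H : Finset (Finset V)) (r : ℕ) : specRad H r = 0 := by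
  have hnone : ∀ lam, ¬ IsTensorEig H r lam := fun _ ⟨x, hx0, _⟩ => hx0 (Subsingleton.elim _ _)
  simp [specRad, hnone, Real.sSup_empty]

end Hypergraph

section GroupDivisibleDesign

theorem Finset.injOn_of_card_filter_le_one {V β : Type*} [DecidableEq β] {g : V → β}
    {e : Finset V} (h : ∀ i, #{v ∈ e | g v = i} ≤ 1) : Set.InjOn g e := fun x hx y hy hxy =>
  card_le_one.mp (h (g x)) x (mem_filter.mpr ⟨hx, rfl⟩) y (mem_filter.mpr ⟨hy, hxy.symm⟩)

variable {V β : Type*} {H : Finset (Finset V)} {g : V → β}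

theorem shadowGraph_colorable [Fintype β] (hinj : ∀ e ∈ H, Set.InjOn g e) :
    (shadowGraph H).Colorable (Fintype.card β) :=
  (SimpleGraph.Coloring.mk (G := shadowGraph H) g
    fun ⟨hxy, e, he, hx, hy⟩ => hxy ∘ hinj e he hx hy).colorable

theorem ContainsExpansion.colorable [DecidableEq V] {α : Type*} [Fintype α] [DecidableEq α]
    {F : SimpleGraph α} [DecidableRel F.Adj] {r n : ℕ}
    (hF : ContainsExpansion r (F.edgeFinset.image sym2ToFinset) H)
    (hH : (shadowGraph H).Colorable n) : F.Colorable n := by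
  obtain ⟨f, S, hf, -, -, -, hmem⟩ := hF
  refine hH.of_hom
    (⟨f, fun {a b} hab => ⟨hf.ne hab.ne, _, hmem {a, b} ?_, ?_, ?_⟩⟩ : F →g shadowGraph H)
  · exact mem_image.mpr ⟨s(a, b), SimpleGraph.mem_edgeFinset.mpr hab, rfl⟩
  · exact mem_union_left _ (mem_image_of_mem f (mem_insert_self a {b}))
  · exact mem_union_left _ (mem_image_of_mem f (mem_insert_of_mem (mem_singleton_self b)))

theorem vertexDegree_mul_sub_one [Fintype V] [DecidableEq V] [DecidableEq β] {r : ℕ}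
    (hblock : ∀ e ∈ H, e.card = r) (hinj : ∀ e ∈ H, Set.InjOn g e)
    (hpair : ∀ x y, g x ≠ g y → ∃! e, e ∈ H ∧ x ∈ e ∧ y ∈ e) (v : V) :
    vertexDegree H v * (r - 1) = #{w | g w ≠ g v} := by
  have hdisj : (H.filter (v ∈ ·) : Set (Finset V)).PairwiseDisjoint (·.erase v) := by
    intro e he f hf hef
    rw [coe_filter] at he hf
    refine disjoint_left.mpr fun w hwe hwf => hef ?_
    obtain ⟨hwv, hwe⟩ := mem_erase.mp hwe
    have hgw : g w ≠ g v := fun h => hwv (hinj e he.1 hwe he.2 h)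
    exact (hpair w v hgw).unique ⟨he.1, hwe, he.2⟩ ⟨hf.1, (mem_erase.mp hwf).2, hf.2⟩
  have hcover : (H.filter (v ∈ ·)).biUnion (·.erase v) = univ.filter (g · ≠ g v) := by
    ext w
    simp only [mem_biUnion, mem_filter, mem_erase, mem_univ, true_and]
    constructor
    · rintro ⟨e, ⟨he, hve⟩, hwv, hwe⟩ h
      exact hwv (hinj e he hwe hve h)
    · intro hgw
      obtain ⟨e, ⟨he, hwe, hve⟩, -⟩ := hpair w v hgw
      exact ⟨e, ⟨he, hve⟩, fun h => hgw (congrArg g h), hwe⟩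
  rw [← hcover, card_biUnion hdisj, vertexDegree, card_eq_sum_ones, sum_mul, one_mul]
  refine sum_congr rfl fun e he => ?_
  obtain ⟨he, hve⟩ := mem_filter.mp he
  rw [card_erase_of_mem hve, hblock e he]

theorem card_filter_ne_eq_of_card_fiber_eq {V : Type*} [Fintype V] {m k : ℕ}
    (hn : Fintype.card V = m * k) (g : V → Fin k) (hgroups : ∀ i, #{v | g v = i} = m) (v : V) :
    #{w | g w ≠ g v} = m * (k - 1) := by
  have hsplit := card_filter_add_card_filter_not (s := univ) (fun w => g w = g v)
  rw [card_univ, hn, hgroups] at hsplit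
  simp only [ne_eq]
  rw [Nat.mul_sub_one]
  omega

end GroupDivisibleDesign

theorem stmt_18_general {α V : Type*} [Fintype α] [DecidableEq α] [Fintype V] [DecidableEq V]
    (m k r : ℕ) (hr : 2 ≤ r)
    (hn : Fintype.card V = m * k)
    (g : V → Fin k)
    (hgroups : ∀ i : Fin k, (Finset.univ.filter (fun v => g v = i)).card = m)
    (H : Finset (Finset V))
    (hblock : ∀ e ∈ H, e.card = r)
    (hmeet : ∀ e ∈ H, ∀ i : Fin k, (e.filter (fun v => g v = i)).card ≤ 1)
    (hpair : ∀ x y : V, g x ≠ g y → ∃! e, e ∈ H ∧ x ∈ e ∧ y ∈ e)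
    (F : SimpleGraph α) [DecidableRel F.Adj]
    (hchi : F.chromaticNumber = (k + 1 : ℕ)) :
    ¬ ContainsExpansion r (F.edgeFinset.image sym2ToFinset) H ∧
    (∀ v : V, (H.filter (fun e => v ∈ e)).card * (r - 1) = m * (k - 1)) ∧
    specRad H r = ((Fintype.card V : ℝ) * ((k : ℝ) - 1)) / ((k : ℝ) * ((r : ℝ) - 1)) := by
  have hinj : ∀ e ∈ H, Set.InjOn g e := fun e he => injOn_of_card_filter_le_one (hmeet e he)
  have hreg (v : V) : vertexDegree H v * (r - 1) = m * (k - 1) := by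
    rw [vertexDegree_mul_sub_one hblock hinj hpair, card_filter_ne_eq_of_card_fiber_eq hn g hgroups]
  refine ⟨fun hF => ?_, hreg, ?_⟩
  · have hcol := (hF.colorable (shadowGraph_colorable hinj)).chromaticNumber_le
    rw [hchi, Fintype.card_fin, Nat.cast_le] at hcol
    omega
  cases isEmpty_or_nonempty V with
  | inl => rw [specRad_of_isEmpty, Fintype.card_eq_zero, Nat.cast_zero, zero_mul, zero_div]
  | inr hV =>
    have v₀ : V := hV.some
    have hk : 1 ≤ k := Nat.pos_of_mul_pos_left (hn ▸ Fintype.card_pos)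
    have hdeg (v : V) : vertexDegree H v = vertexDegree H v₀ :=
      Nat.eq_of_mul_eq_mul_right (by omega) ((hreg v).trans (hreg v₀).symm)
    have hd : (vertexDegree H v₀ : ℝ) * ((r : ℝ) - 1) = m * ((k : ℝ) - 1) := by
      have h := congrArg (Nat.cast : ℕ → ℝ) (hreg v₀)
      push_cast [Nat.cast_sub (by omega : 1 ≤ r), Nat.cast_sub hk] at h
      exact h
    have hkr : (k : ℝ) * ((r : ℝ) - 1) ≠ 0 := by
      have : (2 : ℝ) ≤ r := by exact_mod_cast hr
      exact mul_ne_zero (by positivity) (by linarith)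
    rw [specRad_eq_of_forall_vertexDegree_eq hblock hdeg, hn, eq_div_iff hkr]
    push_cast
    linear_combination (k : ℝ) * hd

/-- Let `H` be the hypergraph of a 2-GDD of group type `m^k`, block size `r`
and index 1 (with the divisibility conditions), on `n = mk` points, and let
`F` be a graph with chromatic number `k+1`. Then `H` is `F^r`-free, is
`m(k-1)/(r-1)`-regular, and has spectral radius exactly `n(k-1)/(k(r-1))`. -/
theorem stmt_18 {α V : Type*} [Fintype α] [DecidableEq α] [Fintype V] [DecidableEq V]
    (m k r : ℕ) (hr : 2 ≤ r) (hrk : r ≤ k)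
    (hdiv1 : (r - 1) ∣ m * (k - 1))
    (hdiv2 : r * (r - 1) ∣ m ^ 2 * k * (k - 1))
    (hn : Fintype.card V = m * k)
    (g : V → Fin k)
    (hgroups : ∀ i : Fin k, (Finset.univ.filter (fun v => g v = i)).card = m)
    (H : Finset (Finset V))
    (hblock : ∀ e ∈ H, e.card = r)
    (hmeet : ∀ e ∈ H, ∀ i : Fin k, (e.filter (fun v => g v = i)).card ≤ 1)
    (hpair : ∀ x y : V, g x ≠ g y → ∃! e, e ∈ H ∧ x ∈ e ∧ y ∈ e)
    (F : SimpleGraph α) [DecidableRel F.Adj]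
    (hchi : F.chromaticNumber = (k + 1 : ℕ)) :
    ¬ ContainsExpansion r (F.edgeFinset.image sym2ToFinset) H ∧
    (∀ v : V, (H.filter (fun e => v ∈ e)).card * (r - 1) = m * (k - 1)) ∧
    specRad H r = ((Fintype.card V : ℝ) * ((k : ℝ) - 1)) / ((k : ℝ) * ((r : ℝ) - 1)) :=
  stmt_18_general m k r hr hn g hgroups H hblock hmeet hpair F hchi
end
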